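/- Let $A_R(x)$ and $B_1(x)$ be formal power series with nonnegative coefficients satisfying $A_R = B_1(2e^{A_R} - 1)$, with $B_1(0) = 0$ and $A_R(0) = 0$. Then $A_R(x) = R(2B_1(x)e^{-B_1(x)}) - B_1(x)$, where $R$ is the tree function satisfying $R(u) = u e^{R(u)}$, $R(0)=0$. -/

import Mathlib

/-! Write `e(y)` for `exp` with `y` substituted. The functional equation gives
`A + B = 2B e(A) = E e(A + B)` with `E = 2B e(-B)`, while the tree function satisfies `R = X e(R)`,
hence `R(E) = E e(R(E))`. A series with zero constant term solving `Y = E e(Y)` is unique: for two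
solutions `Y = Z + D` one has `e(Y) = e(Z) e(D)` and `D ∣ e(D) - 1`, so `D = D · E e(Z) q`, and
`1 - E e(Z) q` is a unit.

The identity `R = X e(R)` says that `e(R)` has coefficients `(n+1)^(n-1)/n!`. Both `e(R)` and that
series solve `F' = F R'` with `F(0) = 1`; for the latter this is Abel's identity
`∑_{i+j=m} C(m,i) (i+1)^(i-1) (1+j)^j = (m+2)^m`. Its version with a free parameter `y` in place of
the second `1` is proved by differentiating in `y` and evaluating at `y = -(m+1)`, where the sum
becomes an `m`-th finite difference of a polynomial of degree `m - 1`. -/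

open Nat

/-- The exponential of a formal power series with zero constant term
(coefficientwise truncated exponential sum). -/
noncomputable def expPS (y : PowerSeries ℝ) : PowerSeries ℝ :=
  PowerSeries.mk fun k =>
    ∑ n ∈ Finset.range (k + 1), PowerSeries.coeff k (y ^ n) / (n ! : ℝ)

/-- Composition `f ∘ g` of formal power series, valid when `g` has zero
constant term (coefficientwise truncated sum). -/
noncomputable def compPS (f g : PowerSeries ℝ) : PowerSeries ℝ :=
  PowerSeries.mk fun k =>
    ∑ n ∈ Finset.range (k + 1), PowerSeries.coeff n f * PowerSeries.coeff k (g ^ n)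

/-- The Cayley tree function `R(x) = ∑_{n ≥ 1} n^(n-1) xⁿ/n!` as a formal
power series: the unique solution of `R = x e^R` with `R(0) = 0`. -/
noncomputable def treeSeries : PowerSeries ℝ :=
  PowerSeries.mk fun n => if n = 0 then 0 else (n : ℝ) ^ (n - 1) / (n ! : ℝ)

open PowerSeries Finset

namespace PowerSeries

section CommRing

variable {R : Type*} [CommRing R]

theorem coeff_pow_eq_zero_of_lt {a : R⟦X⟧} (ha : constantCoeff a = 0) {k n : ℕ} (h : k < n) :
    coeff k (a ^ n) = 0 :=
  X_pow_dvd_iff.mp (pow_dvd_pow_of_dvd (X_dvd_iff.mpr ha) n) k h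

theorem coeff_subst_eq_sum_range {a : R⟦X⟧} (ha : constantCoeff a = 0) (f : R⟦X⟧) (k : ℕ) :
    coeff k (f.subst a) = ∑ n ∈ range (k + 1), coeff n f * coeff k (a ^ n) := by
  rw [coeff_subst' (HasSubst.of_constantCoeff_zero' ha), finsum_eq_sum_of_support_subset]
  · rfl
  · intro n hn
    by_contra h
    simp only [coe_range, Set.mem_Iio, not_lt] at h
    exact hn (by simp [coeff_pow_eq_zero_of_lt ha (show k < n by omega)])

theorem constantCoeff_subst_of_constantCoeff_eq_zero {a : R⟦X⟧} (ha : constantCoeff a = 0)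
    (f : R⟦X⟧) : constantCoeff (f.subst a) = constantCoeff f := by
  rw [← coeff_zero_eq_constantCoeff_apply, coeff_subst' (HasSubst.of_constantCoeff_zero' ha),
    finsum_eq_single _ 0 fun d hd => by simp [ha, zero_pow hd]]
  simp

end CommRing

variable {K : Type*} [Field K] [CharZero K]

theorem eq_of_derivative_eq_mul {f g c : K⟦X⟧} (hf : d⁄dX K f = f * c)
    (hg : d⁄dX K g = g * c) (hg0 : constantCoeff g ≠ 0)
    (h0 : constantCoeff f = constantCoeff g) : f = g := by
  have hgg : g⁻¹ * g = 1 := PowerSeries.inv_mul_cancel g hg0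
  have hq : f * g⁻¹ = 1 := by
    refine derivative.ext ?_ ?_
    · rw [Derivation.leibniz, derivative_inv', hf, hg, derivative_one, smul_eq_mul, smul_eq_mul]
      linear_combination (-(f * c * g⁻¹)) * hgg
    · simp [h0, hg0]
  calc f = f * g⁻¹ * g := by rw [mul_assoc, hgg, mul_one]
    _ = g := by rw [hq, one_mul]

theorem derivative_exp_subst {y : K⟦X⟧} (hy : constantCoeff y = 0) :
    d⁄dX K ((exp K).subst y) = (exp K).subst y * d⁄dX K y := by
  rw [derivative_subst (HasSubst.of_constantCoeff_zero' hy), derivative_exp]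

theorem exp_subst_add {a b : K⟦X⟧} (ha : constantCoeff a = 0) (hb : constantCoeff b = 0) :
    (exp K).subst (a + b) = (exp K).subst a * (exp K).subst b := by
  have hab : constantCoeff (a + b) = 0 := by simp [ha, hb]
  refine eq_of_derivative_eq_mul (c := d⁄dX K (a + b)) (derivative_exp_subst hab) ?_ ?_ ?_
  · rw [Derivation.leibniz, derivative_exp_subst ha, derivative_exp_subst hb, map_add]
    simp only [smul_eq_mul]
    ring
  · simp [constantCoeff_subst_of_constantCoeff_eq_zero, ha, hb]
  · simp [constantCoeff_subst_of_constantCoeff_eq_zero, ha, hb, hab]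

theorem exists_exp_subst_sub_one_eq_mul {d : K⟦X⟧} (hd : constantCoeff d = 0) :
    ∃ q : K⟦X⟧, (exp K).subst d - 1 = d * q := by
  have hd' := HasSubst.of_constantCoeff_zero' hd
  obtain ⟨p, hp⟩ : X ∣ exp K - 1 := X_dvd_iff.mpr (by simp)
  refine ⟨p.subst d, ?_⟩
  have h1 : (1 : K⟦X⟧).subst d = 1 := by rw [← coe_substAlgHom hd', map_one]
  calc (exp K).subst d - 1 = (exp K - 1).subst d := by rw [subst_sub hd', h1]
    _ = d * p.subst d := by rw [hp, subst_mul hd', subst_X hd']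

theorem eq_of_eq_mul_exp_subst {e y z : K⟦X⟧} (he : constantCoeff e = 0)
    (hy0 : constantCoeff y = 0) (hz0 : constantCoeff z = 0)
    (hy : y = e * (exp K).subst y) (hz : z = e * (exp K).subst z) : y = z := by
  have hd : constantCoeff (y - z) = 0 := by simp [hy0, hz0]
  obtain ⟨q, hq⟩ := exists_exp_subst_sub_one_eq_mul hd
  have hsplit : (exp K).subst y = (exp K).subst z * (exp K).subst (y - z) := by
    rw [← exp_subst_add hz0 hd, add_sub_cancel]
  have hfactor : (y - z) * (1 - e * (exp K).subst z * q) = 0 := by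
    linear_combination hy - hz + e * hsplit + e * (exp K).subst z * hq
  have hne_zero : 1 - e * (exp K).subst z * q ≠ 0 := fun h => by
    simpa [he] using congrArg constantCoeff h
  exact sub_eq_zero.mp ((mul_eq_zero.mp hfactor).resolve_right hne_zero)

end PowerSeries

-- Abel's sum `∑ C(n,i) x (x+i)^(i-1) (y+j)^j` at `x = 1`, where the truncated exponent at `i = 0`
-- does no harm.
noncomputable def abelSum (n : ℕ) (y : ℝ) : ℝ :=
  ∑ p ∈ antidiagonal n, (n.choose p.1 : ℝ) * ((p.1 : ℝ) + 1) ^ (p.1 - 1) * (y + p.2) ^ p.2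

theorem hasDerivAt_abelSum_succ (n : ℕ) (y : ℝ) :
    HasDerivAt (abelSum (n + 1)) ((n + 1) * abelSum n (y + 1)) y := by
  have hterm : ∀ p ∈ antidiagonal (n + 1), HasDerivAt
      (fun y : ℝ => ((n + 1).choose p.1 : ℝ) * ((p.1 : ℝ) + 1) ^ (p.1 - 1) * (y + p.2) ^ p.2)
      (((n + 1).choose p.1 : ℝ) * ((p.1 : ℝ) + 1) ^ (p.1 - 1) * (p.2 * (y + p.2) ^ (p.2 - 1))) y := by
    intro p _
    simpa using (((hasDerivAt_id y).add_const (p.2 : ℝ)).fun_pow p.2).const_mul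
      (((n + 1).choose p.1 : ℝ) * ((p.1 : ℝ) + 1) ^ (p.1 - 1))
  refine (HasDerivAt.fun_sum hterm).congr_deriv ?_
  rw [Nat.sum_antidiagonal_succ', abelSum, mul_sum]
  simp only [Nat.cast_zero, zero_mul, mul_zero, zero_add, Nat.add_sub_cancel]
  refine sum_congr rfl fun p hp => ?_
  have hchoose : ((n + 1).choose p.1 : ℝ) * (p.2 + 1 : ℕ) = (n + 1) * n.choose p.1 := by
    have := Nat.choose_mul_succ_eq n p.1
    rw [show n + 1 - p.1 = p.2 + 1 by have := mem_antidiagonal.mp hp; omega] at this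
    exact_mod_cast (by linarith [this] : (n + 1).choose p.1 * (p.2 + 1) = (n + 1) * n.choose p.1)
  rw [show y + ((p.2 + 1 : ℕ) : ℝ) = y + 1 + p.2 by push_cast; ring]
  linear_combination ((p.1 : ℝ) + 1) ^ (p.1 - 1) * (y + 1 + p.2) ^ p.2 * hchoose

theorem abelSum_neg_add_one (n : ℕ) (hn : n ≠ 0) : abelSum n (-(n + 1)) = 0 := by
  have hdiff := congr_fun (fwdDiff_iter_pow_eq_zero_of_lt (R := ℝ) (Nat.sub_one_lt hn)) 1
  rw [fwdDiff_iter_eq_sum_shift, Pi.zero_apply] at hdiff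
  rw [abelSum, Nat.sum_antidiagonal_eq_sum_range_succ_mk, ← hdiff]
  refine sum_congr rfl fun k hk => ?_
  have hk : k ≤ n := Nat.lt_succ_iff.mp (mem_range.mp hk)
  have hpow : ((k : ℝ) + 1) ^ (k - 1) * ((k : ℝ) + 1) ^ (n - k) = ((k : ℝ) + 1) ^ (n - 1) := by
    rcases Nat.eq_zero_or_pos k with rfl | hk0
    · simp
    · rw [← pow_add]; congr 1; omega
  have hbase : -((n : ℝ) + 1) + ((n - k : ℕ) : ℝ) = -((k : ℝ) + 1) := by push_cast [hk]; ring
  dsimp only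
  rw [hbase, neg_pow, zsmul_eq_mul, nsmul_eq_mul, mul_one, add_comm 1 (k : ℝ), ← hpow]
  push_cast
  ring

theorem abelSum_eq_pow (n : ℕ) (y : ℝ) : abelSum n y = (y + n + 1) ^ n := by
  induction n generalizing y with
  | zero => simp [abelSum]
  | succ n ih =>
    set F : ℝ → ℝ := fun y => abelSum (n + 1) y - (y + ((n + 1 : ℕ) + 1)) ^ (n + 1)
    have hF : ∀ y, HasDerivAt F 0 y := fun y => by
      have hpow := ((hasDerivAt_id' y).add_const ((n + 1 : ℕ) + 1 : ℝ)).fun_pow (n + 1)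
      refine ((hasDerivAt_abelSum_succ n y).sub hpow).congr_deriv ?_
      rw [ih]; push_cast; ring
    have hconst := is_const_of_deriv_eq_zero (fun y => (hF y).differentiableAt)
      (fun y => (hF y).deriv) y (-((n + 1 : ℕ) + 1))
    have hzero : F (-((n + 1 : ℕ) + 1)) = 0 := by
      simp only [F, abelSum_neg_add_one (n + 1) n.succ_ne_zero, neg_add_cancel]
      simp
    rw [hzero] at hconst
    linear_combination hconst

theorem constantCoeff_treeSeries : constantCoeff treeSeries = 0 := by
  simp [treeSeries, ← coeff_zero_eq_constantCoeff_apply]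

theorem coeff_succ_treeSeries (n : ℕ) :
    coeff (n + 1) treeSeries = ((n : ℝ) + 1) ^ n / (n + 1)! := by
  simp [treeSeries]

theorem coeff_derivative_treeSeries (n : ℕ) :
    coeff n (d⁄dX ℝ treeSeries) = ((n : ℝ) + 1) ^ n / n ! := by
  rw [coeff_derivative, coeff_succ_treeSeries, Nat.factorial_succ]
  push_cast
  field_simp

theorem exp_subst_treeSeries :
    (exp ℝ).subst treeSeries = mk fun n => ((n : ℝ) + 1) ^ (n - 1) / n ! := by
  refine eq_of_derivative_eq_mul (derivative_exp_subst constantCoeff_treeSeries) ?_ (by simp)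
    (by simp [constantCoeff_subst_of_constantCoeff_eq_zero constantCoeff_treeSeries])
  ext m
  rw [coeff_derivative, coeff_mk, coeff_mul]
  calc ((m + 1 : ℕ) + 1 : ℝ) ^ (m + 1 - 1) / (m + 1)! * (m + 1)
      = abelSum m 1 / m ! := by
        rw [abelSum_eq_pow, Nat.factorial_succ, Nat.add_sub_cancel]
        push_cast
        field_simp
        ring
    _ = _ := by
        rw [abelSum, sum_div]
        refine sum_congr rfl fun p hp => ?_
        obtain rfl := mem_antidiagonal.mp hp
        have hfac := Nat.add_choose_mul_factorial_mul_factorial p.1 p.2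
        have hchoose : ((p.1 + p.2).choose p.2 : ℝ) ≠ 0 := by
          exact_mod_cast (Nat.choose_pos (Nat.le_add_left p.2 p.1)).ne'
        rw [coeff_mk, coeff_derivative_treeSeries, ← hfac, Nat.choose_symm_add]
        push_cast
        field_simp
        ring

theorem treeSeries_eq_X_mul_exp_subst : treeSeries = X * (exp ℝ).subst treeSeries := by
  rw [exp_subst_treeSeries]
  ext n
  rcases n with _ | m
  · simp [treeSeries]
  rw [coeff_succ_treeSeries, coeff_succ_X_mul, coeff_mk]
  rcases m with _ | m
  · simp
  · rw [Nat.factorial_succ, pow_succ]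
    push_cast
    field_simp

theorem compPS_eq_subst (f : ℝ⟦X⟧) {g : ℝ⟦X⟧} (hg : constantCoeff g = 0) :
    compPS f g = f.subst g := by
  ext k
  rw [compPS, coeff_mk, coeff_subst_eq_sum_range hg]

theorem expPS_eq_exp_subst {y : ℝ⟦X⟧} (hy : constantCoeff y = 0) :
    expPS y = (exp ℝ).subst y := by
  rw [← compPS_eq_subst _ hy]
  ext k
  simp [expPS, compPS, coeff_exp, div_eq_inv_mul]

theorem A_R_eq_tree_of_functional_eq_general (A B : PowerSeries ℝ)
    (hA0 : PowerSeries.coeff 0 A = 0) (hB0 : PowerSeries.coeff 0 B = 0)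
    (heq : A = B * (2 * expPS A - 1)) :
    A = compPS treeSeries (2 * B * expPS (-B)) - B := by
  rw [coeff_zero_eq_constantCoeff_apply] at hA0 hB0
  have hnegB : constantCoeff (-B) = 0 := by simp [hB0]
  have hAB : constantCoeff (A + B) = 0 := by simp [hA0, hB0]
  rw [expPS_eq_exp_subst hA0] at heq
  set E := 2 * B * (exp ℝ).subst (-B) with hE
  have hE0 : constantCoeff E = 0 := by simp [E, hB0]
  have hE' := HasSubst.of_constantCoeff_zero' hE0
  rw [expPS_eq_exp_subst hnegB, ← hE, compPS_eq_subst _ hE0]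
  have hfun : A + B = E * (exp ℝ).subst (A + B) := by
    have hsplit : (exp ℝ).subst A = (exp ℝ).subst (-B) * (exp ℝ).subst (A + B) := by
      rw [← exp_subst_add hnegB hAB, add_comm A B, neg_add_cancel_left]
    linear_combination heq + 2 * B * hsplit - (exp ℝ).subst (A + B) * hE
  have htree : treeSeries.subst E = E * (exp ℝ).subst (treeSeries.subst E) := by
    conv_lhs => rw [treeSeries_eq_X_mul_exp_subst]
    rw [subst_mul hE', subst_X hE',
      subst_comp_subst_apply (HasSubst.of_constantCoeff_zero' constantCoeff_treeSeries) hE']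
  have hT0 : constantCoeff (treeSeries.subst E) = 0 := by
    rw [constantCoeff_subst_of_constantCoeff_eq_zero hE0, constantCoeff_treeSeries]
  rw [← eq_of_eq_mul_exp_subst hE0 hAB hT0 hfun htree, add_sub_cancel_right]

/-- If `A_R = B₁ (2 e^{A_R} - 1)` with `A_R(0) = B₁(0) = 0` and nonnegative
coefficients, then `A_R = R(2 B₁ e^{-B₁}) - B₁` where `R` is the tree function. -/
theorem A_R_eq_tree_of_functional_eq (A B : PowerSeries ℝ)
    (hA0 : PowerSeries.coeff 0 A = 0) (hB0 : PowerSeries.coeff 0 B = 0)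
    (hApos : ∀ n, 0 ≤ PowerSeries.coeff n A)
    (hBpos : ∀ n, 0 ≤ PowerSeries.coeff n B)
    (heq : A = B * (2 * expPS A - 1)) :
    A = compPS treeSeries (2 * B * expPS (-B)) - B :=
  A_R_eq_tree_of_functional_eq_general A B hA0 hB0 heq
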